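/- For a parsing expression grammar G=(N,Σ,P,S) and strings w,w'∈Σ*: (S,w)⇝_G w' if and only if S⇒⁺_w w' (where ⇒⁺_w is the transitive closure of the PEG derivation step relation ⇒_w); moreover, S⇒⁺_w w' implies S⇒⁺ w' in the corresponding context-free grammar obtained by replacing prioritized choice '/' by nondeterministic choice '|'. -/

import Mathlib

namespace Ocfg

/-- A symbol: nonterminal or terminal. -/
inductive Sym (N T : Type) : Type
  | nt : N → Sym N T
  | tm : T → Sym N T

/-- An (ordered) context-free grammar: each nonterminal has an ordered
list of right-hand sides; `start` is the start nonterminal. -/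
structure OCFG (N T : Type) : Type where
  prods : N → List (List (Sym N T))
  start : N

/-- Ordered ranked trees used as parse trees: terminal leaves, ε-leaves,
and internal nodes labelled by a nonterminal together with the index of
the rule applied there. -/
inductive PTree (N T : Type) : Type
  | leaf : T → PTree N T
  | eps  : PTree N T
  | node : N → ℕ → List (PTree N T) → PTree N T

mutual
/-- `ParseFrom G A w t`: `t` is a parse tree with root nonterminal `A`
and yield `w`. -/
inductive ParseFrom {N T : Type} (G : OCFG N T) : N → List T → PTree N T → Prop
  | epsNode (A : N) (i : ℕ) :
      (G.prods A)[i]? = some [] →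
      ParseFrom G A [] (PTree.node A i [PTree.eps])
  | node (A : N) (i : ℕ) (r : List (Sym N T)) (w : List T) (cs : List (PTree N T)) :
      (G.prods A)[i]? = some r → r ≠ [] → ParseSeq G r w cs →
      ParseFrom G A w (PTree.node A i cs)

/-- `ParseSeq G r w cs`: the trees `cs` match, in order, the symbols of `r`,
with concatenated yield `w`. -/
inductive ParseSeq {N T : Type} (G : OCFG N T) : List (Sym N T) → List T → List (PTree N T) → Prop
  | nil : ParseSeq G [] [] []
  | consTm (a : T) (r : List (Sym N T)) (w : List T) (cs : List (PTree N T)) :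
      ParseSeq G r w cs →
      ParseSeq G (Sym.tm a :: r) (a :: w) (PTree.leaf a :: cs)
  | consNt (A : N) (t : PTree N T) (wA : List T) (r : List (Sym N T)) (w : List T)
      (cs : List (PTree N T)) :
      ParseFrom G A wA t → ParseSeq G r w cs →
      ParseSeq G (Sym.nt A :: r) (wA ++ w) (t :: cs)
end

/-- The set `P_G(w)` of parse trees of `w`. -/
def parseTrees {N T : Type} (G : OCFG N T) (w : List T) : Set (PTree N T) :=
  {t | ParseFrom G G.start w t}

/-- `n(t)`: the sequence of rule indices of `t`, in pre-order. -/
def PTree.idxSeq {N T : Type} : PTree N T → List ℕ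
  | .leaf _ => []
  | .eps => []
  | .node _ i cs => i :: (cs.attach.map (fun c => PTree.idxSeq c.1)).flatten
decreasing_by
  have := List.sizeOf_lt_of_mem c.2
  simp_wf
  omega

/-- The order `≺_G` on parse trees: lexicographic comparison of the
pre-order rule-index sequences. -/
def treeLT {N T : Type} (t₁ t₂ : PTree N T) : Prop :=
  List.Lex (· < ·) t₁.idxSeq t₂.idxSeq

/-- One-step derivation relation `⇒` of the underlying CFG. -/
def OCFG.Step {N T : Type} (G : OCFG N T) (u v : List (Sym N T)) : Prop :=
  ∃ (u₁ u₂ : List (Sym N T)) (A : N) (r : List (Sym N T)),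
    r ∈ G.prods A ∧ u = u₁ ++ Sym.nt A :: u₂ ∧ v = u₁ ++ r ++ u₂

/-- `⇒*`. -/
def OCFG.Derives {N T : Type} (G : OCFG N T) : List (Sym N T) → List (Sym N T) → Prop :=
  Relation.ReflTransGen G.Step

/-- A nonterminal is useful if it occurs in some sentential form derivable from
the start symbol and derives some terminal string. -/
def Useful {N T : Type} (G : OCFG N T) (A : N) : Prop :=
  (∃ u₁ u₂ : List (Sym N T), G.Derives [Sym.nt G.start] (u₁ ++ Sym.nt A :: u₂)) ∧
  (∃ w : List T, G.Derives [Sym.nt A] (w.map Sym.tm))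

/-- `G` is cyclic if `A ⇒⁺ A` for some nonterminal `A`. -/
def Cyclic {N T : Type} (G : OCFG N T) : Prop :=
  ∃ A : N, Relation.TransGen G.Step [Sym.nt A] [Sym.nt A]

/-- `G` has no ε-rules. -/
def NoEpsRules {N T : Type} (G : OCFG N T) : Prop :=
  ∀ (A : N) (r : List (Sym N T)), r ∈ G.prods A → r ≠ []

/-- A unit-rule step: `A → B` is a rule of `G`. -/
def UnitStep {N T : Type} (G : OCFG N T) (A B : N) : Prop :=
  [Sym.nt B] ∈ G.prods A

/-- `G` has a cycle of unit rules. -/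
def HasUnitCycle {N T : Type} (G : OCFG N T) : Prop :=
  ∃ A : N, Relation.TransGen (UnitStep G) A A

/-- `G` is well-ordered: for every string `w`, every nonempty subset of
`P_G(w)` has a `≺_G`-least element. -/
def WellOrderedG {N T : Type} (G : OCFG N T) : Prop :=
  ∀ (w : List T) (Φ : Set (PTree N T)), Φ ⊆ parseTrees G w → Φ.Nonempty →
    ∃ t ∈ Φ, ∀ t' ∈ Φ, t = t' ∨ treeLT t t'

/-- `t` is the `≺_G`-least parse tree of `w`. -/
def IsLeastTree {N T : Type} (G : OCFG N T) (w : List T) (t : PTree N T) : Prop :=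
  ParseFrom G G.start w t ∧ ∀ t', ParseFrom G G.start w t' → t = t' ∨ treeLT t t'

/-- `G` has least parse trees. -/
def HasLeastTrees {N T : Type} (G : OCFG N T) : Prop :=
  ∀ w : List T, (parseTrees G w).Nonempty → ∃ t, IsLeastTree G w t

/-- Derivations of a given length (number of steps). -/
inductive DerivesIn {N T : Type} (G : OCFG N T) : List (Sym N T) → List (Sym N T) → ℕ → Prop
  | refl (u : List (Sym N T)) : DerivesIn G u u 0
  | step (u v w : List (Sym N T)) (n : ℕ) :
      G.Step u v → DerivesIn G v w n → DerivesIn G u w (n + 1)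

/-- Number of rule applications in a parse tree (= length of the
corresponding leftmost derivation). -/
def PTree.numRules {N T : Type} : PTree N T → ℕ
  | .leaf _ => 0
  | .eps => 0
  | .node _ _ cs => 1 + ((cs.attach.map (fun c => PTree.numRules c.1)).foldr (· + ·) 0)
decreasing_by
  have := List.sizeOf_lt_of_mem c.2
  simp_wf
  omega

/-- Height of a tree: a single leaf has height 0. -/
def PTree.height {N T : Type} : PTree N T → ℕ
  | .leaf _ => 0
  | .eps => 0
  | .node _ _ cs => 1 + ((cs.attach.map (fun c => PTree.height c.1)).foldr max 0)
decreasing_by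
  have := List.sizeOf_lt_of_mem c.2
  simp_wf
  omega

/-- The language of `G`. -/
def langOf {N T : Type} (G : OCFG N T) : Language T :=
  {w | ∃ t, ParseFrom G G.start w t}

end Ocfg

namespace Ocfg

mutual
/-- PEG matching semantics `(e,x) ⇝_G o` for a sequence expression `e`:
`o = some x₁` means success consuming the prefix `x₁` of `x`,
`o = none` means failure `f`. -/
inductive SMatch {N T : Type} (G : OCFG N T) : List (Sym N T) → List T → Option (List T) → Prop
  | nil (x : List T) : SMatch G [] x (some [])
  | tmOk (a : T) (e : List (Sym N T)) (x x₂ : List T) :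
      SMatch G e x (some x₂) →
      SMatch G (Sym.tm a :: e) (a :: x) (some (a :: x₂))
  | tmRestFail (a : T) (e : List (Sym N T)) (x : List T) :
      SMatch G e x none →
      SMatch G (Sym.tm a :: e) (a :: x) none
  | tmFailEmpty (a : T) (e : List (Sym N T)) :
      SMatch G (Sym.tm a :: e) [] none
  | tmFailMismatch (a b : T) (e : List (Sym N T)) (x : List T) :
      a ≠ b →
      SMatch G (Sym.tm a :: e) (b :: x) none
  | ntOk (A : N) (e : List (Sym N T)) (x₁ y x₂ : List T) :
      ChoiceMatch G (G.prods A) (x₁ ++ y) (some x₁) →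
      SMatch G e y (some x₂) →
      SMatch G (Sym.nt A :: e) (x₁ ++ y) (some (x₁ ++ x₂))
  | ntFail (A : N) (e : List (Sym N T)) (x : List T) :
      ChoiceMatch G (G.prods A) x none →
      SMatch G (Sym.nt A :: e) x none
  | ntRestFail (A : N) (e : List (Sym N T)) (x₁ y : List T) :
      ChoiceMatch G (G.prods A) (x₁ ++ y) (some x₁) →
      SMatch G e y none →
      SMatch G (Sym.nt A :: e) (x₁ ++ y) none

/-- Prioritized choice `e₁/e₂/…/e_n`: try the alternatives in order. -/
inductive ChoiceMatch {N T : Type} (G : OCFG N T) : List (List (Sym N T)) → List T → Option (List T) → Prop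
  | nilFail (x : List T) : ChoiceMatch G [] x none
  | headOk (e : List (Sym N T)) (es : List (List (Sym N T))) (x x₁ : List T) :
      SMatch G e x (some x₁) →
      ChoiceMatch G (e :: es) x (some x₁)
  | headFail (e : List (Sym N T)) (es : List (List (Sym N T))) (x : List T) (o : Option (List T)) :
      SMatch G e x none → ChoiceMatch G es x o →
      ChoiceMatch G (e :: es) x o
end

/-- The PEG derivation step `u ⇒_w v`: rewrite the leftmost nonterminal `A`
of `u = u' A u₂` (`u' ∈ Σ*`) using the first alternative of the production
for `A` that does not fail on `w` (prefixed with `u'`). -/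
def PStep {N T : Type} (G : OCFG N T) (w : List T) (u v : List (Sym N T)) : Prop :=
  ∃ (u' : List T) (A : N) (u₂ : List (Sym N T)) (i : ℕ) (r : List (Sym N T)),
    (G.prods A)[i]? = some r ∧
    u = u'.map Sym.tm ++ Sym.nt A :: u₂ ∧
    v = u'.map Sym.tm ++ r ++ u₂ ∧
    (∃ v' : List T, SMatch G (u'.map Sym.tm ++ r) w (some (u' ++ v'))) ∧
    (∀ (j : ℕ) (r' : List (Sym N T)), j < i → (G.prods A)[j]? = some r' →
      SMatch G (u'.map Sym.tm ++ r') w none)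

end Ocfg

/-!
A PEG step `u ⇒_w v` does not change what `u` matches on `w` (`PStep.smatch_iff`): its success
test forces `w = u' y`, and on `y` the alternative `r` it picks for the leftmost nonterminal `A` is
exactly the one prioritized choice commits to, so `A u₂` and `r u₂` match the same prefix of `y`.
Along `S ⇒⁺_w w'` the terminal string `w'` therefore matches `w` exactly as `S` does, and `S` does
match, by the success test of the first step. Conversely, a match of `S` unfolds into a leftmost
derivation by induction on the matching derivation. Each PEG step is a CFG step with the same rule.
-/

namespace Ocfg

variable {N T : Type} {G : OCFG N T}

mutual
theorem SMatch.det {e : List (Sym N T)} {x : List T} {o₁ o₂ : Option (List T)}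
    (h : SMatch G e x o₁) (h' : SMatch G e x o₂) : o₁ = o₂ :=
  match h, h' with
  | .nil _, .nil _ => rfl
  | .tmOk _ _ _ _ h₁, .tmOk _ _ _ _ h₂ => by rw [Option.some_inj.mp (h₁.det h₂)]
  | .tmOk _ _ _ _ h₁, .tmRestFail _ _ _ h₂ => nomatch h₁.det h₂
  | .tmRestFail _ _ _ h₁, .tmOk _ _ _ _ h₂ => nomatch h₁.det h₂
  | .tmRestFail _ _ _ _, .tmRestFail _ _ _ _ => rfl
  | .tmOk _ _ _ _ _, .tmFailMismatch _ _ _ _ hne => absurd rfl hne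
  | .tmRestFail _ _ _ _, .tmFailMismatch _ _ _ _ hne => absurd rfl hne
  | .tmFailMismatch _ _ _ _ hne, .tmOk _ _ _ _ _ => absurd rfl hne
  | .tmFailMismatch _ _ _ _ hne, .tmRestFail _ _ _ _ => absurd rfl hne
  | .tmFailEmpty _ _, .tmFailEmpty _ _ => rfl
  | .tmFailMismatch _ _ _ _ _, .tmFailMismatch _ _ _ _ _ => rfl
  | .ntFail _ _ _ _, .ntFail _ _ _ _ => rfl
  | .ntFail _ _ _ hc₁, .ntOk _ _ _ _ _ hc₂ _ => nomatch hc₁.det hc₂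
  | .ntFail _ _ _ hc₁, .ntRestFail _ _ _ _ hc₂ _ => nomatch hc₁.det hc₂
  | .ntOk _ _ x₁ y _ hc₁ hs₁, h' => by
    generalize hx : x₁ ++ y = x at h'
    cases h' with
    | ntFail _ _ _ hc₂ => subst hx; nomatch hc₁.det hc₂
    | ntOk _ _ x₁' y' _ hc₂ hs₂ =>
      rw [← hx] at hc₂
      cases hc₁.det hc₂
      cases List.append_cancel_left hx
      cases hs₁.det hs₂
      rfl
    | ntRestFail _ _ x₁' y' hc₂ hs₂ =>
      rw [← hx] at hc₂
      cases hc₁.det hc₂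
      cases List.append_cancel_left hx
      nomatch hs₁.det hs₂
  | .ntRestFail _ _ x₁ y hc₁ hs₁, h' => by
    generalize hx : x₁ ++ y = x at h'
    cases h' with
    | ntFail _ _ _ hc₂ => subst hx; nomatch hc₁.det hc₂
    | ntOk _ _ x₁' y' _ hc₂ hs₂ =>
      rw [← hx] at hc₂
      cases hc₁.det hc₂
      cases List.append_cancel_left hx
      nomatch hs₁.det hs₂
    | ntRestFail => rfl
termination_by structural h

theorem ChoiceMatch.det {rs : List (List (Sym N T))} {x : List T} {o₁ o₂ : Option (List T)}
    (h : ChoiceMatch G rs x o₁) (h' : ChoiceMatch G rs x o₂) : o₁ = o₂ :=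
  match h, h' with
  | .nilFail _, .nilFail _ => rfl
  | .headOk _ _ _ _ h₁, .headOk _ _ _ _ h₂ => h₁.det h₂
  | .headOk _ _ _ _ h₁, .headFail _ _ _ _ h₂ _ => nomatch h₁.det h₂
  | .headFail _ _ _ _ h₁ _, .headOk _ _ _ _ h₂ => nomatch h₁.det h₂
  | .headFail _ _ _ _ _ hs₁, .headFail _ _ _ _ _ hs₂ => hs₁.det hs₂
termination_by structural h
end

mutual
theorem SMatch.prefix {e : List (Sym N T)} {x : List T} {o : Option (List T)}
    (h : SMatch G e x o) : ∀ z ∈ o, z <+: x :=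
  match h with
  | .nil _ => fun _ hz => by cases hz; exact List.nil_prefix
  | .tmOk _ _ _ _ h => fun _ hz => by
    cases hz; exact List.cons_prefix_cons.mpr ⟨rfl, h.prefix _ rfl⟩
  | .ntOk _ _ x₁ _ _ _ hs => fun _ hz => by
    cases hz; exact (List.prefix_append_right_inj x₁).mpr (hs.prefix _ rfl)
  | .tmRestFail .. | .tmFailEmpty .. | .tmFailMismatch .. | .ntFail .. | .ntRestFail .. =>
    fun _ hz => nomatch hz
termination_by structural h

theorem ChoiceMatch.prefix {rs : List (List (Sym N T))} {x : List T} {o : Option (List T)}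
    (h : ChoiceMatch G rs x o) : ∀ z ∈ o, z <+: x :=
  match h with
  | .nilFail _ => fun _ hz => nomatch hz
  | .headOk _ _ _ _ h => h.prefix
  | .headFail _ _ _ _ _ h => h.prefix
termination_by structural h
end

theorem smatch_nil_iff {x : List T} {o : Option (List T)} : SMatch G [] x o ↔ o = some [] :=
  ⟨fun h => by cases h; rfl, fun h => h ▸ .nil x⟩

theorem smatch_tm_cons_cons_iff {a : T} {e : List (Sym N T)} {x : List T} {o : Option (List T)} :
    SMatch G (.tm a :: e) (a :: x) o ↔ ∃ o', o = o'.map (a :: ·) ∧ SMatch G e x o' := by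
  constructor
  · intro h
    cases h with
    | tmOk _ _ _ x₂ h => exact ⟨some x₂, rfl, h⟩
    | tmRestFail _ _ _ h => exact ⟨none, rfl, h⟩
    | tmFailMismatch _ _ _ _ hne => exact absurd rfl hne
  · rintro ⟨_ | z, rfl, h⟩
    exacts [.tmRestFail _ _ _ h, .tmOk _ _ _ _ h]

theorem smatch_map_tm_append_iff {u y : List T} {e : List (Sym N T)} {o : Option (List T)} :
    SMatch G (u.map .tm ++ e) (u ++ y) o ↔ ∃ o', o = o'.map (u ++ ·) ∧ SMatch G e y o' := by
  induction u generalizing o with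
  | nil => simp
  | cons a u ih =>
    simp only [List.map_cons, List.cons_append, smatch_tm_cons_cons_iff, ih]
    constructor
    · rintro ⟨_, rfl, o', rfl, h⟩
      exact ⟨o', by cases o' <;> rfl, h⟩
    · rintro ⟨o', rfl, h⟩
      exact ⟨_, by cases o' <;> rfl, o', rfl, h⟩

theorem smatch_map_tm_append_some_iff {u y z : List T} {e : List (Sym N T)} :
    SMatch G (u.map .tm ++ e) (u ++ y) (some z) ↔ ∃ z', u ++ z' = z ∧ SMatch G e y (some z') := by
  simp [smatch_map_tm_append_iff]

theorem smatch_map_tm_append_none_iff {u y : List T} {e : List (Sym N T)} :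
    SMatch G (u.map .tm ++ e) (u ++ y) none ↔ SMatch G e y none := by
  simp [smatch_map_tm_append_iff]

theorem eq_of_smatch_map_tm {t x z : List T} (h : SMatch G (t.map .tm) x (some z)) : z = t := by
  induction t generalizing x z with
  | nil => cases h; rfl
  | cons a t ih =>
    cases h with
    | tmOk _ _ _ _ h => rw [ih h]

theorem SMatch.append {e₁ e₂ : List (Sym N T)} {z₁ z₂ y : List T}
    (h₁ : SMatch G e₁ (z₁ ++ y) (some z₁)) (h₂ : SMatch G e₂ y (some z₂)) :
    SMatch G (e₁ ++ e₂) (z₁ ++ y) (some (z₁ ++ z₂)) := by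
  generalize hx : z₁ ++ y = x at h₁
  induction e₁ generalizing x z₁ with
  | nil => cases h₁; simpa [← hx] using h₂
  | cons s e₁ ih =>
    cases h₁ with
    | tmOk _ _ _ _ h₁ =>
      simp only [List.cons_append, List.cons.injEq, true_and] at hx ⊢
      exact .tmOk _ _ _ _ (ih _ hx h₁)
    | ntOk _ _ _ _ _ hc h₁ =>
      rw [List.append_assoc, List.append_cancel_left_eq] at hx
      rw [List.append_assoc]
      exact .ntOk _ _ _ _ _ hc (ih _ hx h₁)

theorem SMatch.exists_of_append {e₁ e₂ : List (Sym N T)} {x z : List T}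
    (h : SMatch G (e₁ ++ e₂) x (some z)) :
    ∃ z₁ z₂ y, x = z₁ ++ y ∧ z = z₁ ++ z₂ ∧ SMatch G e₁ x (some z₁) ∧ SMatch G e₂ y (some z₂) := by
  induction e₁ generalizing x z with
  | nil => exact ⟨[], z, x, rfl, rfl, .nil x, h⟩
  | cons s e₁ ih =>
    cases h with
    | tmOk a _ _ _ h =>
      obtain ⟨z₁, z₂, y, rfl, rfl, h₁, h₂⟩ := ih h
      exact ⟨a :: z₁, z₂, y, rfl, rfl, .tmOk _ _ _ _ h₁, h₂⟩
    | ntOk _ _ x₁ _ _ hc h =>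
      obtain ⟨z₁, z₂, y, rfl, rfl, h₁, h₂⟩ := ih h
      exact ⟨x₁ ++ z₁, z₂, y, by simp, by simp, .ntOk _ _ _ _ _ hc h₁, h₂⟩

theorem smatch_append_some_iff {e₁ e₂ : List (Sym N T)} {x z : List T} :
    SMatch G (e₁ ++ e₂) x (some z) ↔
      ∃ z₁ z₂ y, x = z₁ ++ y ∧ z = z₁ ++ z₂ ∧ SMatch G e₁ x (some z₁) ∧ SMatch G e₂ y (some z₂) :=
  ⟨SMatch.exists_of_append, by rintro ⟨z₁, z₂, y, rfl, rfl, h₁, h₂⟩; exact h₁.append h₂⟩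

theorem smatch_singleton_nt_iff {A : N} {x z : List T} :
    SMatch G [.nt A] x (some z) ↔ ChoiceMatch G (G.prods A) x (some z) := by
  constructor
  · intro h
    cases h with
    | ntOk _ _ _ _ _ hc h => cases smatch_nil_iff.mp h; rwa [List.append_nil]
  · intro hc
    obtain ⟨y, rfl⟩ := hc.prefix z rfl
    simpa using SMatch.ntOk A [] z y [] hc (.nil y)

theorem ChoiceMatch.of_getElem? {rs : List (List (Sym N T))} {i : ℕ} {r : List (Sym N T)}
    {x z : List T} (hr : rs[i]? = some r)
    (hfail : ∀ j r', j < i → rs[j]? = some r' → SMatch G r' x none)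
    (h : SMatch G r x (some z)) : ChoiceMatch G rs x (some z) := by
  induction rs generalizing i with
  | nil => simp at hr
  | cons r₀ rs ih =>
    cases i with
    | zero =>
      cases hr
      exact .headOk _ _ _ _ h
    | succ i =>
      exact .headFail _ _ _ _ (hfail 0 r₀ i.succ_pos rfl)
        (ih hr fun j r' hj hr' => hfail (j + 1) r' (by omega) hr')

theorem choiceMatch_some_iff_of_first {rs : List (List (Sym N T))} {i : ℕ} {r : List (Sym N T)}
    {x v z : List T} (hr : rs[i]? = some r)
    (hfail : ∀ j r', j < i → rs[j]? = some r' → SMatch G r' x none)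
    (hv : SMatch G r x (some v)) :
    ChoiceMatch G rs x (some z) ↔ SMatch G r x (some z) := by
  refine ⟨fun h => ?_, ChoiceMatch.of_getElem? hr hfail⟩
  cases h.det (ChoiceMatch.of_getElem? hr hfail hv)
  exact hv

theorem smatch_nt_cons_iff_of_first {A : N} {i : ℕ} {r e : List (Sym N T)} {x v z : List T}
    (hr : (G.prods A)[i]? = some r)
    (hfail : ∀ j r', j < i → (G.prods A)[j]? = some r' → SMatch G r' x none)
    (hv : SMatch G r x (some v)) :
    SMatch G (.nt A :: e) x (some z) ↔ SMatch G (r ++ e) x (some z) := by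
  rw [← List.singleton_append, smatch_append_some_iff, smatch_append_some_iff]
  simp only [smatch_singleton_nt_iff, choiceMatch_some_iff_of_first hr hfail hv]

theorem PStep.smatch_iff {w : List T} {u v : List (Sym N T)} {z : List T} (hs : PStep G w u v) :
    SMatch G u w (some z) ↔ SMatch G v w (some z) := by
  obtain ⟨u', A, u₂, i, r, hr, rfl, rfl, ⟨v', hv⟩, hfail⟩ := hs
  obtain ⟨y, rfl⟩ : u' <+: w := (List.prefix_append u' v').trans (hv.prefix _ rfl)
  obtain ⟨_, -, hv⟩ := smatch_map_tm_append_some_iff.mp hv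
  simp only [smatch_map_tm_append_none_iff] at hfail
  rw [List.append_assoc, smatch_map_tm_append_some_iff, smatch_map_tm_append_some_iff]
  simp only [smatch_nt_cons_iff_of_first hr hfail hv]

theorem smatch_iff_of_reflTransGen_pStep {w : List T} {u v : List (Sym N T)} {z : List T}
    (h : Relation.ReflTransGen (PStep G w) u v) :
    SMatch G u w (some z) ↔ SMatch G v w (some z) := by
  induction h with
  | refl => rfl
  | tail _ hs ih => exact ih.trans hs.smatch_iff

theorem PStep.exists_smatch_singleton {w : List T} {A : N} {v : List (Sym N T)}
    (hs : PStep G w [.nt A] v) : ∃ z, SMatch G [.nt A] w (some z) := by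
  obtain ⟨u', B, u₂, i, r, hr, hu, -, ⟨v', hv⟩, hfail⟩ := hs
  obtain ⟨rfl, rfl, rfl⟩ : u' = [] ∧ A = B ∧ u₂ = [] := by
    cases u' <;> simp_all
  simp only [List.map_nil, List.nil_append] at hv hfail
  exact ⟨v', smatch_singleton_nt_iff.mpr (ChoiceMatch.of_getElem? hr hfail hv)⟩

theorem PStep.step {w : List T} {u v : List (Sym N T)} (hs : PStep G w u v) : G.Step u v := by
  obtain ⟨u', A, u₂, i, r, hr, rfl, rfl, -, -⟩ := hs
  exact ⟨u'.map .tm, u₂, A, r, List.mem_of_getElem? hr, rfl, rfl⟩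

mutual
theorem SMatch.reflTransGen_pStep {e : List (Sym N T)} {x : List T} {o : Option (List T)}
    (h : SMatch G e x o) : ∀ z ∈ o, ∀ (u : List T) (u₂ : List (Sym N T)),
      Relation.ReflTransGen (PStep G (u ++ x)) (u.map .tm ++ e ++ u₂) ((u ++ z).map .tm ++ u₂) :=
  match h with
  | .nil _ => fun _ hz u u₂ => by cases hz; simp [Relation.ReflTransGen.refl]
  | .tmOk a _ _ _ h => fun _ hz u u₂ => by
    cases hz
    simpa using h.reflTransGen_pStep _ rfl (u ++ [a]) u₂
  | .ntOk A e x₁ y _ hc hs => fun _ hz u u₂ => by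
    cases hz
    obtain ⟨i, r, hr, hfail, hrx, hrd⟩ := hc.reflTransGen_pStep _ rfl
    have hstep : PStep G (u ++ (x₁ ++ y)) (u.map .tm ++ .nt A :: e ++ u₂)
        (u.map .tm ++ r ++ (e ++ u₂)) :=
      ⟨u, A, e ++ u₂, i, r, hr, by simp, rfl,
        ⟨x₁, smatch_map_tm_append_some_iff.mpr ⟨x₁, rfl, hrx⟩⟩,
        fun j r' hj hr' => smatch_map_tm_append_none_iff.mpr (hfail j r' hj hr')⟩
    have hrest := hs.reflTransGen_pStep _ rfl (u ++ x₁) u₂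
    simp only [List.append_assoc, List.map_append] at hstep hrest hrd ⊢
    exact .head hstep ((hrd u (e ++ u₂)).trans hrest)
  | .tmRestFail .. | .tmFailEmpty .. | .tmFailMismatch .. | .ntFail .. | .ntRestFail .. =>
    fun _ hz => nomatch hz
termination_by structural h

theorem ChoiceMatch.reflTransGen_pStep {rs : List (List (Sym N T))} {x : List T}
    {o : Option (List T)} (h : ChoiceMatch G rs x o) :
    ∀ z ∈ o, ∃ (i : ℕ) (r : List (Sym N T)), rs[i]? = some r ∧
      (∀ j r', j < i → rs[j]? = some r' → SMatch G r' x none) ∧ SMatch G r x (some z) ∧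
      ∀ (u : List T) (u₂ : List (Sym N T)),
        Relation.ReflTransGen (PStep G (u ++ x)) (u.map .tm ++ r ++ u₂) ((u ++ z).map .tm ++ u₂) :=
  match h with
  | .nilFail _ => fun _ hz => nomatch hz
  | .headOk _ _ _ _ h => fun z hz =>
    ⟨0, _, rfl, fun j _ hj => absurd hj (Nat.not_lt_zero j), hz ▸ h, h.reflTransGen_pStep z hz⟩
  | .headFail _ _ _ _ h₀ hs => fun z hz => by
    obtain ⟨i, r, hr, hfail, hrx, hrd⟩ := hs.reflTransGen_pStep z hz
    refine ⟨i + 1, r, hr, fun j r' hj hr' => ?_, hrx, hrd⟩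
    cases j with
    | zero => cases hr'; exact h₀
    | succ j => exact hfail j r' (by omega) hr'
termination_by structural h
end

end Ocfg

open Ocfg

/-- `(S,w) ⇝_G w'` iff `S ⇒⁺_w w'`; moreover `S ⇒⁺_w w'` implies
`S ⇒⁺ w'` in the corresponding CFG (prioritized choice replaced by
nondeterministic choice). -/
theorem stmt16 {N T : Type} (G : OCFG N T) (w w' : List T) :
    (SMatch G [Sym.nt G.start] w (some w') ↔
      Relation.TransGen (PStep G w) [Sym.nt G.start] (w'.map Sym.tm)) ∧
    (Relation.TransGen (PStep G w) [Sym.nt G.start] (w'.map Sym.tm) →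
      Relation.TransGen G.Step [Sym.nt G.start] (w'.map Sym.tm)) := by
  refine ⟨⟨fun h => ?_, fun h => ?_⟩, Relation.TransGen.mono (fun _ _ => PStep.step) _ _⟩
  · have hd := h.reflTransGen_pStep w' rfl [] []
    simp only [List.map_nil, List.nil_append, List.append_nil] at hd
    refine (Relation.reflTransGen_iff_eq_or_transGen.mp hd).resolve_left fun heq => ?_
    cases w' <;> simp at heq
  · obtain ⟨_, hs, -⟩ := Relation.TransGen.head'_iff.mp h
    obtain ⟨z, hz⟩ := hs.exists_smatch_singleton
    have hfin := (smatch_iff_of_reflTransGen_pStep h.to_reflTransGen).mp hz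
    rwa [eq_of_smatch_map_tm hfin] at hz
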